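/- arXiv:2507.16428 — 4 statements merged into one kernel-verified Lean document; each statement's English description precedes it below -/
import Mathlib

section
/- Let X = {χ₁, …, χ_n} be a finite set of primitive vectors in ℤ^d and let p be a prime. If the map sending each χ_i to the line spanned by its mod-p reduction in 𝔽_p^d is not surjective onto the set of all lines in 𝔽_p^d, then there exists a matrix M ∈ ℤ^{d×d} with |det(M)| = p such that M·χ_i is a primitive vector of ℤ^d for every i. -/
theorem stmt_6 {d n : ℕ} (p : ℕ) (hp : p.Prime) (χ : Fin n → Fin d → ℤ)
    (hprim : ∀ i, Finset.univ.gcd (χ i) = 1)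
    (hns : ∃ L : Submodule (ZMod p) (Fin d → ZMod p),
        Module.finrank (ZMod p) L = 1 ∧
        ∀ i, L ≠ Submodule.span (ZMod p)
          ({fun j => ((χ i j : ZMod p))} : Set (Fin d → ZMod p))) :
    ∃ M : Matrix (Fin d) (Fin d) ℤ, M.det.natAbs = p ∧
      ∀ i, Finset.univ.gcd (M.mulVec (χ i)) = 1 := by
  haveI : Fact p.Prime := ⟨hp⟩
  obtain ⟨L, hL1, hLne⟩ := hns
  have hLbot : L ≠ ⊥ := by
    intro h
    rw [h, finrank_bot] at hL1
    exact zero_ne_one hL1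
  obtain ⟨x, hxL, hx0⟩ := Submodule.exists_mem_ne_zero_of_ne_bot hLbot
  obtain ⟨k, hk⟩ : ∃ k, x k ≠ 0 := by
    by_contra h
    push_neg at h
    exact hx0 (funext h)
  set w : Fin d → ZMod p := (x k)⁻¹ • x with hwdef
  have hwk : w k = 1 := by simp [hwdef, inv_mul_cancel₀ hk]
  have hw0 : w ≠ 0 := by
    intro h
    have := congrFun h k
    rw [hwk] at this
    exact one_ne_zero this
  have hwL : w ∈ L := L.smul_mem _ hxL
  have hLw : L = Submodule.span (ZMod p) {w} := by
    have hle : Submodule.span (ZMod p) {w} ≤ L := by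
      rw [Submodule.span_le, Set.singleton_subset_iff]; exact hwL
    have hfr : Module.finrank (ZMod p) (Submodule.span (ZMod p) {w}) = 1 :=
      finrank_span_singleton hw0
    exact (Submodule.eq_of_le_of_finrank_le hle (by rw [hfr, hL1])).symm
  set v : Fin d → ℤ := fun j => if j = k then 1 else ((w j).val : ℤ) with hvdef
  have hv : ∀ j, ((v j : ℤ) : ZMod p) = w j := by
    intro j
    by_cases hj : j = k
    · simp [hvdef, hj, hwk]
    · simp [hvdef, hj, ZMod.natCast_val, ZMod.cast_id]
  have hvk : v k = 1 := by simp [hvdef]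
  set c : Fin d → ℤ := fun j => (if j = k then 1 + (p : ℤ) else 0) - v j with hcdef
  set M : Matrix (Fin d) (Fin d) ℤ := (1 : Matrix (Fin d) (Fin d) ℤ).updateCol k c with hMdef
  have hdet : M.det = p := by
    rw [hMdef, ← Matrix.cramer_apply, Matrix.cramer_one]
    simp [hcdef, hvk]
  have hmv : ∀ (y : Fin d → ℤ) j,
      M.mulVec y j = y j + ((if j = k then (p : ℤ) else 0) - v j) * y k := by
    intro y j
    rw [hMdef]
    simp only [Matrix.mulVec, dotProduct, Matrix.updateCol_apply, Matrix.one_apply]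
    have : ∀ l ∈ Finset.univ, (if l = k then c j else if j = l then (1:ℤ) else 0) * y l
        = (if j = l then y l else 0) + (if l = k then (((if j = k then (p:ℤ) else 0) - v j)) * y l else 0) := by
      intro l _
      by_cases hl : l = k <;> by_cases hj : j = l <;>
        simp [hl, hj, hcdef, hvk] <;> subst_vars <;> simp_all [hcdef, hvk] <;> ring
    rw [Finset.sum_congr rfl this, Finset.sum_add_distrib]
    simp [Finset.sum_ite_eq]
  refine ⟨M, by rw [hdet]; exact Int.natAbs_natCast p, ?_⟩
  intro a
  by_contra hg
  set g : ℤ := Finset.univ.gcd (M.mulVec (χ a)) with hgdef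
  have hgnorm : normalize g = g := Finset.normalize_gcd
  have hgabs : g.natAbs ≠ 1 := by
    intro h1
    rcases Int.natAbs_eq_iff.mp h1 with h | h
    · exact hg (by exact_mod_cast h)
    · have h2 := Int.nonneg_of_normalize_eq_self hgnorm
      rw [h] at h2
      norm_num at h2
  obtain ⟨q, hq, hqd⟩ := Int.exists_prime_and_dvd hgabs
  have hqent : ∀ j, q ∣ M.mulVec (χ a) j := fun j =>
    hqd.trans (Finset.gcd_dvd (Finset.mem_univ j))
  by_cases hqp : q ∣ (p : ℤ)
  · -- then p divides all entries
    have hpq : (p : ℤ) ∣ q := by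
      have h1 : q.natAbs ∣ p := by
        have h1' := Int.natAbs_dvd_natAbs.mpr hqp
        simpa using h1'
      have h2 : q.natAbs = p := ((Nat.Prime.eq_one_or_self_of_dvd hp _ h1).resolve_left
        (Int.prime_iff_natAbs_prime.mp hq).one_lt.ne')
      rw [← h2]
      exact Int.natAbs_dvd.mpr dvd_rfl
    have hpent : ∀ j, (p : ℤ) ∣ M.mulVec (χ a) j := fun j => (hpq.trans (hqd)).trans
      (Finset.gcd_dvd (Finset.mem_univ j))
    have hzm : ∀ j, ((χ a j : ZMod p)) = (χ a k : ZMod p) * w j := by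
      intro j
      have hd2 : (p : ℤ) ∣ χ a j - v j * χ a k := by
        have h1 := hpent j
        rw [hmv] at h1
        have h2 : (p : ℤ) ∣ (if j = k then (p : ℤ) else 0) * χ a k := by
          split
          · exact Dvd.dvd.mul_right dvd_rfl _
          · simp
        have h3 : χ a j - v j * χ a k
            = (χ a j + ((if j = k then (p : ℤ) else 0) - v j) * χ a k)
              - (if j = k then (p : ℤ) else 0) * χ a k := by ring
        rw [h3]
        exact dvd_sub h1 h2
      have h0 : ((χ a j - v j * χ a k : ℤ) : ZMod p) = 0 :=
        (ZMod.intCast_zmod_eq_zero_iff_dvd _ _).mpr hd2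
      push_cast at h0
      rw [hv j] at h0
      linear_combination h0
    by_cases hc0 : (χ a k : ZMod p) = 0
    · have hall : ∀ j, (p : ℤ) ∣ χ a j := by
        intro j
        rw [← ZMod.intCast_zmod_eq_zero_iff_dvd]
        rw [hzm j, hc0, zero_mul]
      have : (p : ℤ) ∣ 1 := (hprim a) ▸ Finset.dvd_gcd fun j _ => hall j
      have h4 := Int.le_of_dvd one_pos this
      have h5 := hp.two_le
      omega
    · apply hLne a
      rw [hLw]
      have hfun : (fun j => ((χ a j : ZMod p))) = (χ a k : ZMod p) • w := by
        funext j; simp [hzm j]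
      rw [hfun, Submodule.span_singleton_smul_eq (Ne.isUnit hc0)]
  · -- q coprime to p
    have hpχ : ∀ j, q ∣ (p : ℤ) * χ a j := by
      intro j
      have hAdj : (p : ℤ) * χ a j = (Matrix.adjugate M).mulVec (M.mulVec (χ a)) j := by
        rw [Matrix.mulVec_mulVec, Matrix.adjugate_mul, hdet]
        simp [Matrix.smul_mulVec, Matrix.one_mulVec, Pi.smul_apply]
      rw [hAdj]
      simp only [Matrix.mulVec, dotProduct]
      exact Finset.dvd_sum fun l _ => Dvd.dvd.mul_left (hqent l) _
    have hχ : ∀ j, q ∣ χ a j := by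
      intro j
      rcases hq.2.2 _ _ (hpχ j) with h | h
      · exact absurd h hqp
      · exact h
    have : q ∣ 1 := (hprim a) ▸ Finset.dvd_gcd fun j _ => hχ j
    exact hq.not_unit (isUnit_of_dvd_one this)
end

section
/- Let X = {χ₁, …, χ_n} be primitive vectors in ℤ^d and p a prime. If every line of 𝔽_p^d is of the form 𝔽_p·χ̄_i for some i, then for every matrix M ∈ ℤ^{d×d} whose determinant is a positive power of p, there exists an index i such that M·χ_i is not primitive in ℤ^d. -/
theorem stmt_7 {d n : ℕ} (p : ℕ) (hp : p.Prime) (χ : Fin n → Fin d → ℤ)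
    (hprim : ∀ i, Finset.univ.gcd (χ i) = 1)
    (hsurj : ∀ L : Submodule (ZMod p) (Fin d → ZMod p),
        Module.finrank (ZMod p) L = 1 →
        ∃ i, L = Submodule.span (ZMod p)
          ({fun j => ((χ i j : ZMod p))} : Set (Fin d → ZMod p))) :
    ∀ M : Matrix (Fin d) (Fin d) ℤ, (∃ k : ℕ, 0 < k ∧ M.det.natAbs = p ^ k) →
      ∃ i, Finset.univ.gcd (M.mulVec (χ i)) ≠ 1 := by
  rintro M ⟨k, hk, hdet⟩
  haveI : Fact p.Prime := ⟨hp⟩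
  set Mp : Matrix (Fin d) (Fin d) (ZMod p) := M.map (Int.cast) with hMp
  have hpdvd : (p : ℤ) ∣ M.det := by
    have h1 : p ∣ M.det.natAbs := by
      rw [hdet]; exact dvd_pow_self p hk.ne'
    exact Int.dvd_natAbs.mp (Int.natCast_dvd_natCast.mpr h1)
  have hdet0 : Mp.det = 0 := by
    have h2 : Mp.det = ((M.det : ℤ) : ZMod p) := by
      rw [hMp]
      exact (RingHom.map_det (Int.castRingHom (ZMod p)) M).symm
    rw [h2]
    exact (ZMod.intCast_zmod_eq_zero_iff_dvd _ _).mpr hpdvd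
  obtain ⟨v, hv0, hv⟩ := Matrix.exists_mulVec_eq_zero_iff.mpr hdet0
  obtain ⟨i, hi⟩ := hsurj (Submodule.span (ZMod p) {v}) (finrank_span_singleton hv0)
  refine ⟨i, ?_⟩
  have hmem : (fun j => ((χ i j : ZMod p))) ∈ Submodule.span (ZMod p) ({v} : Set _) := by
    rw [hi]
    exact Submodule.mem_span_singleton_self _
  obtain ⟨c, hc⟩ := Submodule.mem_span_singleton.mp hmem
  have hmul : Mp.mulVec (fun j => ((χ i j : ZMod p))) = 0 := by
    rw [← hc, Matrix.mulVec_smul, hv, smul_zero]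
  intro hgcd
  have hdvd : ∀ j, (p : ℤ) ∣ M.mulVec (χ i) j := by
    intro j
    have h3 := congrFun hmul j
    have h4 : ((M.mulVec (χ i) j : ℤ) : ZMod p) = 0 := by
      simp only [hMp, Matrix.mulVec, dotProduct, Matrix.map_apply,
        Pi.zero_apply] at h3
      rw [Matrix.mulVec, dotProduct]
      push_cast
      exact h3
    exact (ZMod.intCast_zmod_eq_zero_iff_dvd _ _).mp h4
  have hdg : (p : ℤ) ∣ Finset.univ.gcd (M.mulVec (χ i)) :=
    Finset.dvd_gcd fun j _ => hdvd j
  rw [hgcd] at hdg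
  have : p ∣ 1 := by exact_mod_cast hdg
  exact hp.one_lt.ne' (Nat.dvd_one.mp this)
end

section
/- Let G = N ⋊ H be a semidirect product of groups such that the conjugation action of H on N induces the trivial action on the abelianization N_ab. Then the abelianization of G is isomorphic to N_ab × H_ab. -/
/-! When `H` acts trivially on `N_ab`, the map `(n, h) ↦ ([n], [h])` is a homomorphism
`N ⋊ H → N_ab × H_ab`; it factors through `G_ab`, and `N_ab × H_ab → G_ab` induced by the two
inclusions `N → G`, `H → G` is inverse to it because `(n, h) = inl n * inr h`. -/

namespace SemidirectProduct

variable {N H : Type*} [Group N] [Group H] {φ : H →* MulAut N}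

theorem abelianization_of_map_eq_of_mul_inv_mem_commutator
    (hφ : ∀ (h : H) (n : N), (φ h) n * n⁻¹ ∈ commutator N) (h : H) (n : N) :
    Abelianization.of ((φ h) n) = Abelianization.of n := by
  rw [← mul_inv_eq_one, ← map_inv, ← map_mul]
  exact (QuotientGroup.eq_one_iff _).mpr (hφ h n)

variable (φ)

def toAbelianizationProd
    (hφ : ∀ (h : H) (n : N), Abelianization.of ((φ h) n) = Abelianization.of n) :
    N ⋊[φ] H →* Abelianization N × Abelianization H where
  toFun g := (Abelianization.of g.left, Abelianization.of g.right)
  map_one' := by simp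
  map_mul' a b := by simp [hφ]

def ofAbelianizationProd : Abelianization N × Abelianization H →* Abelianization (N ⋊[φ] H) :=
  (Abelianization.lift (Abelianization.of.comp inl)).coprod
    (Abelianization.lift (Abelianization.of.comp inr))

def abelianizationEquivProd
    (hφ : ∀ (h : H) (n : N), Abelianization.of ((φ h) n) = Abelianization.of n) :
    Abelianization (N ⋊[φ] H) ≃* Abelianization N × Abelianization H :=
  MonoidHom.toMulEquiv (Abelianization.lift (toAbelianizationProd φ hφ)) (ofAbelianizationProd φ)
    (Abelianization.hom_ext _ _ <| MonoidHom.ext fun g => by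
      simp [toAbelianizationProd, ofAbelianizationProd, ← map_mul, inl_left_mul_inr_right])
    (by
      rw [ofAbelianizationProd, MonoidHom.comp_coprod, ← MonoidHom.coprod_inl_inr]
      congr 1 <;>
        exact Abelianization.hom_ext _ _ (MonoidHom.ext fun _ => by simp [toAbelianizationProd]))

end SemidirectProduct

theorem stmt_9 {N H : Type*} [Group N] [Group H] (φ : H →* MulAut N)
    (hφ : ∀ (h : H) (n : N), (φ h) n * n⁻¹ ∈ commutator N) :
    Nonempty (Abelianization (N ⋊[φ] H) ≃* Abelianization N × Abelianization H) :=
  ⟨SemidirectProduct.abelianizationEquivProd φ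
    (SemidirectProduct.abelianization_of_map_eq_of_mul_inv_mem_commutator hφ)⟩
end

section
/- Let G be a group with infinite cyclic center Z(G), and suppose G ≅ H × ℤ for some group H. Then the image of the factor 1 × ℤ under this isomorphism equals Z(G); consequently G/Z(G) ≅ H. -/
/-!
Since `ℤ` is abelian, the center of `H × ℤ` is `Z(H) × ℤ`. If this is infinite cyclic then `Z(H)`
is trivial, because `ℤ × C` is never cyclic for a nontrivial group `C`. Hence `Z(H × ℤ) = 1 × ℤ`,
and the isomorphism carries it to `Z(G)`; the quotient by it is the first factor `H`.
-/

open Subgroup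

theorem Subgroup.comap_center_of_mulEquiv {G K : Type*} [Group G] [Group K] (e : G ≃* K) :
    (center K).comap e.toMonoidHom = center G := by
  ext x
  simp only [mem_comap, mem_center_iff, e.surjective.forall, MulEquiv.coe_toMonoidHom,
    ← map_mul, e.injective.eq_iff]

theorem Subgroup.center_prod_commGroup {H A : Type*} [Group H] [CommGroup A] :
    center (H × A) = (center H).prod ⊤ := by
  rw [Subgroup.center_prod, CommGroup.center_eq_top]

theorem subsingleton_of_prod_int_mulEquiv {C : Type*} [Group C]
    (f : C × Multiplicative ℤ ≃* Multiplicative ℤ) : Subsingleton C := by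
  by_contra hC
  rw [not_subsingleton_iff_nontrivial] at hC
  exact not_isCyclic_prod_of_infinite_nontrivial (Multiplicative ℤ) C <|
    isCyclic_of_surjective (MulEquiv.prodComm.trans f).symm.toMonoidHom
      (MulEquiv.prodComm.trans f).symm.surjective

theorem Subgroup.center_eq_bot_of_center_prod_int_mulEquiv {H : Type*} [Group H]
    (ψ : center (H × Multiplicative ℤ) ≃* Multiplicative ℤ) : center H = ⊥ := by
  have f : center H × Multiplicative ℤ ≃* Multiplicative ℤ :=
    ((MulEquiv.refl _).prodCongr topEquiv.symm).trans <| (prodEquiv _ _).symm.trans <|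
      (MulEquiv.subgroupCongr center_prod_commGroup).symm.trans ψ
  have := subsingleton_of_prod_int_mulEquiv f
  exact eq_bot_of_subsingleton _

theorem MonoidHom.ker_fst_comp_mulEquiv {G H K : Type*} [Group G] [Group H] [Group K]
    (e : G ≃* H × K) :
    ((MonoidHom.fst H K).comp e.toMonoidHom).ker =
      ((⊥ : Subgroup H).prod ⊤).comap e.toMonoidHom := by
  rw [← MonoidHom.comap_ker, MonoidHom.ker_fst]

theorem stmt_10 {G H : Type*} [Group G] [Group H]
    (e : G ≃* H × Multiplicative ℤ)
    (hZ : Nonempty (Subgroup.center G ≃* Multiplicative ℤ)) :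
    Subgroup.comap e.toMonoidHom ((⊥ : Subgroup H).prod ⊤) = Subgroup.center G ∧
      Nonempty (G ⧸ Subgroup.center G ≃* H) := by
  obtain ⟨ψ⟩ := hZ
  have hH : center H = ⊥ :=
    center_eq_bot_of_center_prod_int_mulEquiv ((centerCongr e).symm.trans ψ)
  have hcomap : ((⊥ : Subgroup H).prod ⊤).comap e.toMonoidHom = center G := by
    rw [← hH, ← center_prod_commGroup, comap_center_of_mulEquiv]
  refine ⟨hcomap, ⟨?_⟩⟩
  have hsurj : Function.Surjective ((MonoidHom.fst H (Multiplicative ℤ)).comp e.toMonoidHom) :=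
    Prod.fst_surjective.comp e.surjective
  have hker : center G = ((MonoidHom.fst H (Multiplicative ℤ)).comp e.toMonoidHom).ker := by
    rw [MonoidHom.ker_fst_comp_mulEquiv, hcomap]
  exact (QuotientGroup.quotientMulEquivOfEq hker).trans
    (QuotientGroup.quotientKerEquivOfSurjective _ hsurj)
end
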